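/- arXiv:2307.04874 — 8 statements merged into one kernel-verified Lean document; each statement's English description precedes it below -/
import Mathlib

section
/- If β : V × U → W is a flat bilinear form (with respect to a positive definite inner product on W) and Z₀ ∈ U is a right regular element (i.e., the rank of the linear map β^{Z₀} : X ↦ β(X, Z₀) is maximal among all elements of U), then the left nullity Δ_β = {X ∈ V : β(X,Y) = 0 for all Y ∈ U} equals ker(β^{Z₀}). -/
open Module LinearMap RealInnerProductSpace

section Gram

variable {W : Type*} [NormedAddCommGroup W] [InnerProductSpace ℝ W]

lemma gram_mulVec {n : ℕ} (v : Fin n → W) (c : Fin n → ℝ) (i : Fin n) :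
    (Matrix.of fun i j => ⟪v i, v j⟫).mulVec c i = ⟪v i, ∑ j, c j • v j⟫ := by
  simp [Matrix.mulVec, dotProduct, inner_sum, real_inner_smul_right, mul_comm]

lemma gram_det_eq_zero_of_not_li {n : ℕ} {v : Fin n → W}
    (h : ¬ LinearIndependent ℝ v) :
    (Matrix.of fun i j => ⟪v i, v j⟫).det = 0 := by
  obtain ⟨c, hsum, i, hci⟩ := Fintype.not_linearIndependent_iff.1 h
  refine Matrix.exists_mulVec_eq_zero_iff.1 ⟨c, ?_, ?_⟩
  · exact fun hc => hci (by simp [hc])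
  · funext j
    rw [gram_mulVec, hsum]
    simp

lemma gram_det_ne_zero_of_li {n : ℕ} {v : Fin n → W}
    (h : LinearIndependent ℝ v) :
    (Matrix.of fun i j => ⟪v i, v j⟫).det ≠ 0 := by
  intro hdet
  obtain ⟨c, hc0, hc⟩ := Matrix.exists_mulVec_eq_zero_iff.2 hdet
  have hz : ∑ j, c j • v j = 0 := by
    have h1 : ⟪∑ i, c i • v i, ∑ j, c j • v j⟫ = 0 := by
      rw [sum_inner]
      have : ∀ i, ⟪c i • v i, ∑ j, c j • v j⟫ = c i * ((Matrix.of fun i j => ⟪v i, v j⟫).mulVec c i) := by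
        intro i
        rw [gram_mulVec, real_inner_smul_left]
      simp only [this, hc]
      simp
    exact inner_self_eq_zero.1 h1
  have := Fintype.linearIndependent_iff.1 h c hz
  exact hc0 (funext this)

end Gram

/-- Moore's lemma: for a flat bilinear form, the left nullity equals the kernel of
`β^{Z₀}` at any right regular element `Z₀`. -/
theorem flat_nullity_eq_ker_at_regular
    {V U W : Type*} [AddCommGroup V] [Module ℝ V] [FiniteDimensional ℝ V]
    [AddCommGroup U] [Module ℝ U] [FiniteDimensional ℝ U]
    [NormedAddCommGroup W] [InnerProductSpace ℝ W] [FiniteDimensional ℝ W]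
    (β : V →ₗ[ℝ] U →ₗ[ℝ] W)
    (hflat : ∀ (X Z : V) (Y T : U), ⟪β X Y, β Z T⟫ = ⟪β X T, β Z Y⟫)
    (Z₀ : U)
    (hreg : ∀ Y : U, finrank ℝ (range (β.flip Y)) ≤ finrank ℝ (range (β.flip Z₀))) :
    ker β = ker (β.flip Z₀) := by
  set k := finrank ℝ (range (β.flip Z₀)) with hk
  apply le_antisymm
  · intro X hX
    simp only [mem_ker] at hX ⊢
    simp [hX]
  intro X hX
  simp only [mem_ker, flip_apply] at hX
  -- goal: β X = 0
  have hbXZ : β X Z₀ = 0 := hX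
  -- choose preimages of a basis of the range
  obtain ⟨b⟩ : Nonempty (Basis (Fin k) ℝ (range (β.flip Z₀))) := ⟨finBasis ℝ _⟩
  have hx : ∀ i : Fin k, ∃ x : V, β x Z₀ = (b i : W) := by
    intro i
    obtain ⟨x, hxeq⟩ := (b i).2
    exact ⟨x, hxeq⟩
  choose x hxb using hx
  have hli : LinearIndependent ℝ (fun i : Fin k => β (x i) Z₀) := by
    have : (fun i : Fin k => β (x i) Z₀) = (Submodule.subtype _) ∘ (fun i => b i) := by
      funext i; simp [hxb]
    rw [this]
    exact b.linearIndependent.map' _ (Submodule.ker_subtype _)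
  suffices h : ∀ Y : U, β X Y = 0 by
    simp only [mem_ker]
    exact LinearMap.ext h
  intro Y
  set w := β X Y with hw
  by_contra hwne
  -- family of vectors
  set u : ℝ → Fin (k + 1) → W :=
    fun t => Fin.snoc (fun i : Fin k => β (x i) (Z₀ + t • Y)) w with hu
  set G : ℝ → ℝ := fun t => (Matrix.of fun i j => ⟪u t i, u t j⟫).det with hG
  -- for t ≠ 0, all vectors lie in range (β.flip (Z₀ + t • Y)), which has rank ≤ k
  have hGzero : ∀ t : ℝ, t ≠ 0 → G t = 0 := by
    intro t ht
    apply gram_det_eq_zero_of_not_li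
    intro hind
    have hp : True := trivial
    have hmem : ∀ i : Fin (k + 1), u t i ∈ range (β.flip (Z₀ + t • Y)) := by
      intro i
      refine Fin.lastCases ?_ ?_ i
      · -- last : w
        have : β X (Z₀ + t • Y) = t • w := by
          simp [hw, hbXZ]
        have h2 : w = β.flip (Z₀ + t • Y) (t⁻¹ • X) := by
          simp only [flip_apply, map_smul, this]
          rw [smul_smul, inv_mul_cancel₀ ht, one_smul]
        rw [hu]
        simp only [Fin.snoc_last]
        rw [h2]
        exact mem_range_self _ _
      · intro i
        rw [hu]
        simp only [Fin.snoc_castSucc]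
        exact ⟨x i, rfl⟩
    -- linear independence in submodule gives card bound
    have hind' : LinearIndependent ℝ (fun i => (⟨u t i, hmem i⟩ : range (β.flip (Z₀ + t • Y)))) := by
      apply LinearIndependent.of_comp (range (β.flip (Z₀ + t • Y))).subtype
      exact hind
    have hcard := hind'.fintype_card_le_finrank
    simp only [Fintype.card_fin] at hcard
    have := hreg (Z₀ + t • Y)
    omega
  -- continuity of G
  have hGcont : Continuous G := by
    have huform : ∀ i : Fin (k + 1), ∃ a bv : W, ∀ t : ℝ, u t i = a + t • bv := by
      intro i
      refine Fin.lastCases ?_ ?_ i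
      · exact ⟨w, 0, fun t => by simp [hu]⟩
      · intro i
        refine ⟨β (x i) Z₀, β (x i) Y, fun t => ?_⟩
        simp [hu]
    choose a bv hab using huform
    have : G = fun t => (Matrix.of fun i j => ⟪a i + t • bv i, a j + t • bv j⟫).det := by
      funext t
      simp only [hG]
      congr 1
      ext i j
      simp [hab]
    rw [this]
    apply Continuous.matrix_det
    apply continuous_matrix
    intro i j
    exact Continuous.inner
      (continuous_const.add (continuous_id.smul continuous_const))
      (continuous_const.add (continuous_id.smul continuous_const))
  -- G 0 = 0 by continuity
  have hG0 : G 0 = 0 := by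
    have h1 : Filter.Tendsto G (nhdsWithin 0 {(0:ℝ)}ᶜ) (nhds (G 0)) :=
      (hGcont.continuousAt).tendsto.mono_left nhdsWithin_le_nhds
    have h2 : Filter.Tendsto G (nhdsWithin 0 {(0:ℝ)}ᶜ) (nhds 0) := by
      apply Filter.Tendsto.congr' _ tendsto_const_nhds
      filter_upwards [self_mem_nhdsWithin] with t ht
      exact (hGzero t ht).symm
    exact tendsto_nhds_unique h1 h2
  -- hence u 0 is dependent
  have hdep : ¬ LinearIndependent ℝ (u 0) := by
    intro h
    exact gram_det_ne_zero_of_li h hG0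
  obtain ⟨c, hsum, i₀, hci₀⟩ := Fintype.not_linearIndependent_iff.1 hdep
  have hu0 : ∀ i : Fin k, u 0 (Fin.castSucc i) = β (x i) Z₀ := by
    intro i; simp [hu]
  have hu0l : u 0 (Fin.last k) = w := by simp [hu]
  -- orthogonality: ⟪β (x i) Z₀, w⟫ = 0
  have horth : ∀ i : Fin k, ⟪β (x i) Z₀, w⟫ = 0 := by
    intro i
    rw [hw, hflat, hbXZ]
    simp
  -- inner product of the relation with w
  have hkey : c (Fin.last k) * ⟪w, w⟫ = 0 := by
    have h1 : ⟪∑ i, c i • u 0 i, w⟫ = 0 := by rw [hsum]; simp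
    rw [sum_inner, Fin.sum_univ_castSucc] at h1
    simp only [real_inner_smul_left] at h1
    have h2 : ∀ i : Fin k, c (Fin.castSucc i) * ⟪u 0 (Fin.castSucc i), w⟫ = 0 := by
      intro i; rw [hu0, horth]; ring
    rw [Finset.sum_congr rfl (fun i _ => h2 i), Finset.sum_const_zero, zero_add, hu0l] at h1
    exact h1
  have hcl : c (Fin.last k) = 0 := by
    rcases mul_eq_zero.1 hkey with h | h
    · exact h
    · exact absurd (inner_self_eq_zero.1 h) hwne
  -- then the castSucc part gives a contradiction with independence
  have hsum' : ∑ i : Fin k, c (Fin.castSucc i) • β (x i) Z₀ = 0 := by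
    have := hsum
    rw [Fin.sum_univ_castSucc, hcl, zero_smul, add_zero] at this
    rw [← this]
    exact Finset.sum_congr rfl fun i _ => by rw [hu0]
  have hcz := Fintype.linearIndependent_iff.1 hli (fun i => c (Fin.castSucc i)) hsum'
  -- c is zero everywhere, contradiction
  refine hci₀ ?_
  refine Fin.lastCases hcl (fun i => hcz i) i₀
end

section
/- If β : V × U → W is a flat bilinear form between finite-dimensional real vector spaces with W an inner product space, then dim(Δ_β) ≥ dim(V) − dim(W), where Δ_β is the left nullity of β. -/
open Module LinearMap RealInnerProductSpace

/-!
Choose `Y₀` for which `β(·, Y₀)` has maximal rank `r`. If `β(X, Y₀) = 0`, then `β(X, Y)` lies in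
the range of `β(·, Y₀)`: otherwise, adding it to `r` vectors `β(eⱼ, Y₀)` spanning that range gives
`r + 1` independent vectors, which remain independent for `β(eⱼ, Y₀ + tY)` with small `t ≠ 0`, and
`β(X, Y) = t⁻¹ β(X, Y₀ + tY)`, so `β(·, Y₀ + tY)` would have rank `r + 1`. Flatness makes
`β(X, Y)` orthogonal to that range, so `β(X, Y) = 0`. Hence `ker β(·, Y₀) ⊆ Δ_β`, and rank–nullity
gives the bound.
-/

namespace LinearMap

theorem exists_linearIndependent_comp_fin_finrank_range {K V W : Type*} [DivisionRing K]
    [AddCommGroup V] [Module K V] [AddCommGroup W] [Module K W] (f : V →ₗ[K] W)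
    [FiniteDimensional K (range f)] :
    ∃ e : Fin (finrank K (range f)) → V, LinearIndependent K (f ∘ e) := by
  let b := finBasis K (range f)
  choose e he using fun j => (b j).2
  refine ⟨e, ?_⟩
  rw [show f ∘ e = (range f).subtype ∘ b from funext he]
  exact b.linearIndependent.map' _ (Submodule.ker_subtype _)

section Field

variable {K V U W : Type*} [Field K] [AddCommGroup V] [Module K V] [AddCommGroup U] [Module K U]
  [AddCommGroup W] [Module K W] [FiniteDimensional K W]

theorem exists_forall_finrank_range_flip_le (β : V →ₗ[K] U →ₗ[K] W) :
    ∃ Y₀, ∀ Y, finrank K (range (β.flip Y)) ≤ finrank K (range (β.flip Y₀)) := by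
  obtain ⟨_, ⟨Y₀, rfl⟩, hY₀⟩ := BddAbove.exists_isGreatest_of_nonempty
    (S := Set.range fun Y => finrank K (range (β.flip Y)))
    ⟨finrank K W, by rintro _ ⟨Y, rfl⟩; exact Submodule.finrank_le _⟩ (Set.range_nonempty _)
  exact ⟨Y₀, fun Y => hY₀ ⟨Y, rfl⟩⟩

end Field

section NormedField

variable {𝕜 V U W : Type*} [NontriviallyNormedField 𝕜] [CompleteSpace 𝕜]
  [AddCommGroup V] [Module 𝕜 V] [AddCommGroup U] [Module 𝕜 U]
  [NormedAddCommGroup W] [NormedSpace 𝕜 W] [FiniteDimensional 𝕜 W]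

theorem apply_mem_range_flip_of_forall_finrank_range_flip_le (β : V →ₗ[𝕜] U →ₗ[𝕜] W) {Y₀ : U}
    (hmax : ∀ Y, finrank 𝕜 (range (β.flip Y)) ≤ finrank 𝕜 (range (β.flip Y₀)))
    {X : V} (hX : β X Y₀ = 0) (Y : U) : β X Y ∈ range (β.flip Y₀) := by
  by_contra hY
  obtain ⟨e, he⟩ := (β.flip Y₀).exists_linearIndependent_comp_fin_finrank_range
  let v : 𝕜 → Option (Fin (finrank 𝕜 (range (β.flip Y₀)))) → W := fun t o =>
    Option.casesOn' o (β X Y) fun j => β (e j) (Y₀ + t • Y)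
  have hv₀ : LinearIndependent 𝕜 (v 0) := by
    refine LinearIndependent.option (by simpa [Function.comp_def] using he) fun h => hY ?_
    refine Submodule.span_le.mpr ?_ h
    rintro _ ⟨j, rfl⟩
    simp
  have hv : Continuous v := by
    refine continuous_pi fun o => ?_
    cases o <;> simp only [v, Option.casesOn'_none, Option.casesOn'_some, map_add, map_smul]
    · exact continuous_const
    · fun_prop
  obtain ⟨t, hli, ht⟩ := (((hv.tendsto 0).eventually hv₀.eventually).filter_mono
    nhdsWithin_le_nhds |>.and (self_mem_nhdsWithin (s := {0}ᶜ))).exists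
  have hspan : Submodule.span 𝕜 (Set.range (v t)) ≤ range (β.flip (Y₀ + t • Y)) := by
    refine Submodule.span_le.mpr ?_
    rintro _ ⟨o | j, rfl⟩
    · refine ⟨t⁻¹ • X, ?_⟩
      simp [v, hX, smul_smul, inv_mul_cancel₀ (show t ≠ 0 from ht)]
    · exact mem_range_self _ (e j)
  have hrank := Submodule.finrank_mono hspan
  rw [finrank_span_eq_card hli, Fintype.card_option, Fintype.card_fin] at hrank
  exact (hmax (Y₀ + t • Y)).not_gt hrank

end NormedField

section Flat

variable {V U W : Type*} [AddCommGroup V] [Module ℝ V] [AddCommGroup U] [Module ℝ U]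
  [NormedAddCommGroup W] [InnerProductSpace ℝ W] [FiniteDimensional ℝ W]

theorem ker_flip_le_ker_of_flat (β : V →ₗ[ℝ] U →ₗ[ℝ] W)
    (hflat : ∀ (X Z : V) (Y T : U), ⟪β X Y, β Z T⟫ = ⟪β X T, β Z Y⟫) {Y₀ : U}
    (hmax : ∀ Y, finrank ℝ (range (β.flip Y)) ≤ finrank ℝ (range (β.flip Y₀))) :
    ker (β.flip Y₀) ≤ ker β := by
  intro X hX
  rw [mem_ker, flip_apply] at hX
  ext Y
  obtain ⟨Z, hZ⟩ := β.apply_mem_range_flip_of_forall_finrank_range_flip_le hmax hX Y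
  rw [flip_apply] at hZ
  have hself : ⟪β X Y, β X Y⟫ = 0 :=
    calc ⟪β X Y, β X Y⟫ = ⟪β Z Y₀, β X Y⟫ := by rw [hZ]
      _ = ⟪β Z Y, β X Y₀⟫ := hflat Z X Y₀ Y
      _ = 0 := by rw [hX, inner_zero_right]
  simpa using hself

end Flat

end LinearMap

theorem flat_nullity_dim_lower_bound_general
    {V U W : Type*} [AddCommGroup V] [Module ℝ V] [FiniteDimensional ℝ V]
    [AddCommGroup U] [Module ℝ U]
    [NormedAddCommGroup W] [InnerProductSpace ℝ W] [FiniteDimensional ℝ W]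
    (β : V →ₗ[ℝ] U →ₗ[ℝ] W)
    (hflat : ∀ (X Z : V) (Y T : U), ⟪β X Y, β Z T⟫ = ⟪β X T, β Z Y⟫) :
    finrank ℝ V - finrank ℝ W ≤ finrank ℝ (ker β) := by
  obtain ⟨Y₀, hmax⟩ := β.exists_forall_finrank_range_flip_le
  have hker := Submodule.finrank_mono (β.ker_flip_le_ker_of_flat hflat hmax)
  have hrank_nullity := (β.flip Y₀).finrank_range_add_finrank_ker
  have hrange := (range (β.flip Y₀)).finrank_le
  omega

/-- For a flat bilinear form `β : V × U → W`, the left nullity has dimension at least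
`dim V - dim W`. -/
theorem flat_nullity_dim_lower_bound
    {V U W : Type*} [AddCommGroup V] [Module ℝ V] [FiniteDimensional ℝ V]
    [AddCommGroup U] [Module ℝ U] [FiniteDimensional ℝ U]
    [NormedAddCommGroup W] [InnerProductSpace ℝ W] [FiniteDimensional ℝ W]
    (β : V →ₗ[ℝ] U →ₗ[ℝ] W)
    (hflat : ∀ (X Z : V) (Y T : U), ⟪β X Y, β Z T⟫ = ⟪β X T, β Z Y⟫) :
    finrank ℝ V - finrank ℝ W ≤ finrank ℝ (ker β) :=
  flat_nullity_dim_lower_bound_general β hflat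
end

section
/- (Algebraic Chern–Kuiper inequality) Let α : V × V → W be a symmetric flat bilinear form with dim V = n and dim W = p, let Γ ⊆ V be a subspace with the property that α|_{V × Γ} is flat and Δ_α ⊆ Γ. Then ν ≤ μ ≤ ν + p, where ν = dim Δ_α and μ = dim Γ, provided μ equals the dimension of the nullity of the curvature-like tensor R(X,Y,Z,T) = ⟨α(X,T),α(Y,Z)⟩ − ⟨α(X,Z),α(Y,T)⟩. Concretely: if Γ is the nullity of R, then dim Δ_α ≤ dim Γ ≤ dim Δ_α + dim W. -/
/-!
Moore's regular-element argument. Choose `z₀` for which `x ↦ α x z₀` on `Γ` has maximal rank.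
Perturbing `z₀` in any direction `t` cannot raise the rank, while flatness makes `α x t`
orthogonal to the range of `α · z₀` whenever `α x z₀ = 0`; together these force `α x t = 0`.
So the kernel of `α · z₀` on `Γ` is `Δ_α`, and rank–nullity gives `dim Γ ≤ dim Δ_α + dim W`.
-/

open Module LinearMap RealInnerProductSpace

section Pencil

variable {K U R : Type*} [Field K] [Infinite K] [AddCommGroup U] [Module K U]
  [AddCommGroup R] [Module K R] [FiniteDimensional K R]

-- `1 + s • f` fails to be injective only when `-s⁻¹` is one of the finitely many eigenvalues.
theorem Module.End.exists_ne_zero_surjective_one_add_smul (f : Module.End K R) :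
    ∃ s : K, s ≠ 0 ∧ Function.Surjective ⇑((1 : Module.End K R) + s • f) := by
  obtain ⟨μ, hμ⟩ := (f.finite_hasEigenvalue.insert 0).exists_notMem
  obtain ⟨hμ0, hμf⟩ : μ ≠ 0 ∧ ¬f.HasEigenvalue μ := by simpa [not_or] using hμ
  refine ⟨-μ⁻¹, by simpa using hμ0, ?_⟩
  rw [← LinearMap.injective_iff_surjective, injective_iff_map_eq_zero]
  intro x hx
  have hfx : f x = μ • x := by
    have : μ • (x + -μ⁻¹ • f x) = 0 := by simpa using congrArg (μ • ·) hx
    rw [smul_add, smul_smul, mul_neg, mul_inv_cancel₀ hμ0, neg_smul, one_smul,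
      ← sub_eq_add_neg, sub_eq_zero] at this
    exact this.symm
  by_contra hx0
  exact hμf (hasEigenvalue_of_hasEigenvector ⟨mem_eigenspace_iff.2 hfx, hx0⟩)

theorem LinearMap.exists_ne_zero_surjective_add_smul {A : U →ₗ[K] R} (hA : Function.Surjective A)
    (B : U →ₗ[K] R) : ∃ s : K, s ≠ 0 ∧ Function.Surjective ⇑(A + s • B) := by
  obtain ⟨g, hg⟩ := A.exists_rightInverse_of_surjective (range_eq_top.2 hA)
  obtain ⟨s, hs, hsurj⟩ := Module.End.exists_ne_zero_surjective_one_add_smul (B ∘ₗ g)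
  refine ⟨s, hs, Function.Surjective.of_comp (g := g) ?_⟩
  have : (A + s • B) ∘ₗ g = 1 + s • (B ∘ₗ g) := by
    rw [add_comp, hg, smul_comp]; rfl
  rw [← LinearMap.coe_comp, this]
  exact hsurj

end Pencil

section FlatBilinear

variable {U V W : Type*} [AddCommGroup U] [Module ℝ U] [AddCommGroup V] [Module ℝ V]
  [NormedAddCommGroup W] [InnerProductSpace ℝ W]

def LinearMap.IsFlat (β : U →ₗ[ℝ] V →ₗ[ℝ] W) : Prop :=
  ∀ x y : U, ∀ z t : V, ⟪β x t, β y z⟫ = ⟪β x z, β y t⟫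

variable [FiniteDimensional ℝ U]

/-- For suitable `s ≠ 0` the projection of `A + s • B` onto `range A` is still onto, so by
maximality of `rank A` it has the same kernel as `A + s • B`; it kills `x`, hence so does
`A + s • B`, i.e. `s • B x = 0`. -/
theorem LinearMap.eq_zero_of_mem_ker_of_mem_orthogonal_range {A B : U →ₗ[ℝ] W}
    (hmax : ∀ s : ℝ, finrank ℝ (range (A + s • B)) ≤ finrank ℝ (range A))
    {x : U} (hx : A x = 0) (hBx : B x ∈ (range A)ᗮ) : B x = 0 := by
  let π : W →ₗ[ℝ] range A := (range A).orthogonalProjectionOnto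
  have hπA : Function.Surjective ⇑(π ∘ₗ A) := by
    rintro ⟨_, y, rfl⟩
    exact ⟨y, Submodule.orthogonalProjectionOnto_mem_subspace_eq_self ⟨A y, mem_range_self A y⟩⟩
  obtain ⟨s, hs, hsurj⟩ := exists_ne_zero_surjective_add_smul hπA (π ∘ₗ B)
  rw [← comp_smul, ← comp_add] at hsurj
  have hker : ker (A + s • B) = ker (π ∘ₗ (A + s • B)) := by
    refine Submodule.eq_of_le_of_finrank_le (ker_le_ker_comp _ _) ?_
    have h₁ := finrank_range_add_finrank_ker (A + s • B)
    have h₂ := finrank_range_add_finrank_ker (π ∘ₗ (A + s • B))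
    rw [range_eq_top.2 hsurj, finrank_top] at h₂
    have := hmax s
    omega
  have hxker : x ∈ ker (π ∘ₗ (A + s • B)) := by
    simp [π, hx, Submodule.orthogonalProjectionOnto_apply_of_mem_orthogonal hBx]
  rw [← hker, mem_ker] at hxker
  simpa [hx, hs] using hxker

theorem LinearMap.IsFlat.exists_ker_flip_eq_ker {β : U →ₗ[ℝ] V →ₗ[ℝ] W} (hβ : β.IsFlat) :
    ∃ z₀ : V, ker (β.flip z₀) = ker β := by
  obtain ⟨z₀, hz₀⟩ :
      ∃ z₀ : V, ∀ z, finrank ℝ (range (β.flip z)) ≤ finrank ℝ (range (β.flip z₀)) := by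
    have hbdd : BddAbove (Set.range fun z ↦ finrank ℝ (range (β.flip z))) :=
      ⟨finrank ℝ U, by rintro _ ⟨z, rfl⟩; exact finrank_range_le _⟩
    obtain ⟨z₀, hz₀⟩ := Nat.sSup_mem (Set.range_nonempty _) hbdd
    exact ⟨z₀, fun z ↦ (le_csSup hbdd ⟨z, rfl⟩).trans_eq hz₀.symm⟩
  refine ⟨z₀, le_antisymm (fun x hx ↦ ?_) fun x hx ↦ by simp [mem_ker.1 hx]⟩
  rw [mem_ker, flip_apply] at hx
  ext t
  refine eq_zero_of_mem_ker_of_mem_orthogonal_range (A := β.flip z₀) (B := β.flip t)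
    (fun s ↦ ?_) hx ?_
  · rw [← map_smul, ← map_add]
    exact hz₀ _
  · rintro _ ⟨y, rfl⟩
    rw [flip_apply, flip_apply, real_inner_comm, hβ x y z₀ t, hx, inner_zero_left]

theorem LinearMap.IsFlat.finrank_le_finrank_ker_add [FiniteDimensional ℝ W]
    {β : U →ₗ[ℝ] V →ₗ[ℝ] W} (hβ : β.IsFlat) :
    finrank ℝ U ≤ finrank ℝ (ker β) + finrank ℝ W := by
  obtain ⟨z₀, hz₀⟩ := hβ.exists_ker_flip_eq_ker
  rw [← hz₀, ← finrank_range_add_finrank_ker (β.flip z₀), add_comm]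
  exact Nat.add_le_add_left (Submodule.finrank_le _) _

end FlatBilinear

theorem chern_kuiper_inequalities_general
    {V W : Type*} [AddCommGroup V] [Module ℝ V] [FiniteDimensional ℝ V]
    [NormedAddCommGroup W] [InnerProductSpace ℝ W] [FiniteDimensional ℝ W]
    (α : V →ₗ[ℝ] V →ₗ[ℝ] W)
    (Γ : Submodule ℝ V)
    (hΓ : ∀ X : V, X ∈ Γ ↔
      ∀ Y Z T : V, ⟪α X T, α Y Z⟫ - ⟪α X Z, α Y T⟫ = 0) :
    finrank ℝ (ker α) ≤ finrank ℝ Γ ∧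
      finrank ℝ Γ ≤ finrank ℝ (ker α) + finrank ℝ W := by
  have hkerΓ : ker α ≤ Γ := fun X hX ↦ (hΓ X).2 fun Y Z T ↦ by simp [mem_ker.1 hX]
  have hflat : (α ∘ₗ Γ.subtype).IsFlat := fun x y z t ↦ sub_eq_zero.1 ((hΓ x).1 x.2 y z t)
  refine ⟨Submodule.finrank_mono hkerΓ, ?_⟩
  calc finrank ℝ Γ ≤ finrank ℝ (ker (α ∘ₗ Γ.subtype)) + finrank ℝ W :=
        hflat.finrank_le_finrank_ker_add
    _ = finrank ℝ (ker α) + finrank ℝ W := by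
        rw [ker_comp, (Submodule.comapSubtypeEquivOfLe hkerΓ).finrank_eq]

/-- Algebraic Chern–Kuiper inequalities: `ν ≤ μ ≤ ν + p` where `ν` is the dimension of the
nullity of `α`, `μ` the dimension of the nullity of its curvature tensor, `p = dim W`. -/
theorem chern_kuiper_inequalities
    {V W : Type*} [AddCommGroup V] [Module ℝ V] [FiniteDimensional ℝ V]
    [NormedAddCommGroup W] [InnerProductSpace ℝ W] [FiniteDimensional ℝ W]
    (α : V →ₗ[ℝ] V →ₗ[ℝ] W)
    (hsymm : ∀ X Y : V, α X Y = α Y X)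
    (Γ : Submodule ℝ V)
    (hΓ : ∀ X : V, X ∈ Γ ↔
      ∀ Y Z T : V, ⟪α X T, α Y Z⟫ - ⟪α X Z, α Y T⟫ = 0) :
    finrank ℝ (ker α) ≤ finrank ℝ Γ ∧
      finrank ℝ Γ ≤ finrank ℝ (ker α) + finrank ℝ W :=
  chern_kuiper_inequalities_general α Γ hΓ
end

section
/- Let α : V × V → W be a symmetric bilinear map into an inner product space, with curvature R(X,Y,Z,T) = ⟨α(X,T),α(Y,Z)⟩ − ⟨α(X,Z),α(Y,T)⟩, nullity Γ of R, and relative nullity Δ_α of α. If dim Γ = dim Δ_α + dim W, then R = 0 (i.e., the curvature tensor vanishes identically, so Γ = V). -/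
open Module LinearMap RealInnerProductSpace

/-! Choose `Y₀` for which `X ↦ α X Y₀` has maximal rank on `Γ`. If `X ∈ Γ` and `α X Y₀ = 0`, the
flatness of `X` makes `α X Y` orthogonal to `α Γ Y₀`; on the other hand `α X Y` lies in `α Γ Y₀`,
for otherwise the rank of `X ↦ α X (Y₀ + t Y)` would exceed the maximum for small `t ≠ 0`.
Hence `α X = 0`, so the kernel of `α (·) Y₀` on `Γ` lies in `Δ_α` and the dimension hypothesis
forces `α Γ Y₀ = W`. Writing vectors of `W` as `α S Y₀` with `S ∈ Γ` and using the flatness of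
such `S`, the curvature identity transfers from `Γ` to all of `V`. -/

theorem LinearMap.map_ker_le_range_of_forall_finrank_range_add_smul_le
    {𝕜 U W : Type*} [NontriviallyNormedField 𝕜] [CompleteSpace 𝕜]
    [AddCommGroup U] [Module 𝕜 U] [NormedAddCommGroup W] [NormedSpace 𝕜 W]
    [FiniteDimensional 𝕜 W] (L M : U →ₗ[𝕜] W)
    (hmax : ∀ t : 𝕜, finrank 𝕜 (range (L + t • M)) ≤ finrank 𝕜 (range L)) :
    (ker L).map M ≤ range L := by
  rintro _ ⟨X, hX, rfl⟩
  by_contra hMX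
  let b := finBasis 𝕜 (range L)
  choose Xs hXs using fun i => mem_range.1 (b i).2
  -- For `t ≠ 0` all members of `f t` lie in `range (L + t • M)`, since `L X = 0`.
  let f : 𝕜 → Option (Fin (finrank 𝕜 (range L))) → W := fun t o =>
    Option.casesOn' o (M X) fun i => (L + t • M) (Xs i)
  have hf0 : LinearIndependent 𝕜 (f 0) := by
    have hL : LinearIndependent 𝕜 fun i => L (Xs i) := by
      rw [funext hXs]
      exact b.linearIndependent.map' _ (range L).ker_subtype
    have hspan : Submodule.span 𝕜 (Set.range fun i => L (Xs i)) ≤ range L :=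
      Submodule.span_le.2 (Set.range_subset_iff.2 fun i => mem_range_self L _)
    simpa [f] using linearIndependent_option'.2 ⟨hL, fun h => hMX (hspan h)⟩
  have hcont : Continuous f := by
    refine continuous_pi fun o => ?_
    cases o <;> simp only [f, Option.casesOn'_none, Option.casesOn'_some, add_apply,
      smul_apply] <;> fun_prop
  have := NormedField.nhdsNE_neBot (0 : 𝕜)
  obtain ⟨t, hli, ht⟩ : ∃ t, LinearIndependent 𝕜 (f t) ∧ t ≠ 0 :=
    ((((hcont.tendsto 0).eventually hf0.eventually).filter_mono
      (nhdsWithin_le_nhds (s := {0}ᶜ))).and self_mem_nhdsWithin).exists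
  have hmem : ∀ o, f t o ∈ range (L + t • M) := by
    rintro (_ | i)
    · have : M X = t⁻¹ • (L + t • M) X := by
        rw [add_apply, mem_ker.1 hX, smul_apply, zero_add, smul_smul, inv_mul_cancel₀ ht,
          one_smul]
      simpa only [f, Option.casesOn'_none, this] using
        Submodule.smul_mem _ _ (mem_range_self _ X)
    · exact mem_range_self _ _
  have := (finrank_span_eq_card hli).symm.trans_le
    (Submodule.finrank_mono (Submodule.span_le.2 (Set.range_subset_iff.2 hmem)))
  simp only [Fintype.card_option, Fintype.card_fin] at this
  exact (this.trans (hmax t)).not_gt (Nat.lt_succ_self _)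

theorem LinearMap.finrank_ker_domRestrict_le {K M N : Type*} [DivisionRing K] [AddCommGroup M]
    [Module K M] [AddCommGroup N] [Module K N] [FiniteDimensional K M] (f : M →ₗ[K] N)
    (p : Submodule K M) : finrank K (ker (f.domRestrict p)) ≤ finrank K (ker f) :=
  (Submodule.finrank_map_subtype_eq p _).symm.trans_le
    (Submodule.finrank_mono <| Submodule.map_le_iff_le_comap.2 fun _ hx => hx)

section FlatBilinear

variable {U V W : Type*} [AddCommGroup U] [Module ℝ U] [AddCommGroup V] [Module ℝ V]
  [NormedAddCommGroup W] [InnerProductSpace ℝ W] [FiniteDimensional ℝ W]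
  (β : U →ₗ[ℝ] V →ₗ[ℝ] W)

theorem ker_flip_le_ker_of_forall_finrank_range_flip_le
    (hβ : ∀ (X S : U) (Z T : V), ⟪β X T, β S Z⟫ = ⟪β X Z, β S T⟫) {Y₀ : V}
    (hY₀ : ∀ Y, finrank ℝ (range (β.flip Y)) ≤ finrank ℝ (range (β.flip Y₀))) :
    ker (β.flip Y₀) ≤ ker β := by
  intro X hX
  replace hX : β X Y₀ = 0 := hX
  refine mem_ker.2 (LinearMap.ext fun Y => ?_)
  have hrange : β X Y ∈ range (β.flip Y₀) := by
    refine (β.flip Y₀).map_ker_le_range_of_forall_finrank_range_add_smul_le (β.flip Y)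
      (fun t => ?_) ⟨X, hX, rfl⟩
    rw [← map_smul, ← map_add]
    exact hY₀ _
  obtain ⟨S, hS⟩ := mem_range.1 hrange
  have horth : ⟪β X Y, β S Y₀⟫ = 0 := by rw [hβ, hX, inner_zero_left]
  rw [← hS, flip_apply] at horth
  rw [LinearMap.zero_apply, ← hS, flip_apply]
  exact inner_self_eq_zero.1 horth

theorem exists_surjective_flip_of_finrank_ker_add_le [FiniteDimensional ℝ U]
    (hβ : ∀ (X S : U) (Z T : V), ⟪β X T, β S Z⟫ = ⟪β X Z, β S T⟫)
    (hdim : finrank ℝ (ker β) + finrank ℝ W ≤ finrank ℝ U) :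
    ∃ Y₀, Function.Surjective (β.flip Y₀) := by
  obtain ⟨_, ⟨Y₀, rfl⟩, hY₀⟩ := BddAbove.exists_isGreatest_of_nonempty
    (S := Set.range fun Y => finrank ℝ (range (β.flip Y)))
    ⟨finrank ℝ W, Set.forall_mem_range.2 fun _ => Submodule.finrank_le _⟩ (Set.range_nonempty _)
  have hker := Submodule.finrank_mono
    (ker_flip_le_ker_of_forall_finrank_range_flip_le β hβ (Set.forall_mem_range.1 hY₀))
  have := finrank_range_add_finrank_ker (β.flip Y₀)
  refine ⟨Y₀, range_eq_top.1 (Submodule.eq_top_of_finrank_eq ?_)⟩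
  have := Submodule.finrank_le (range (β.flip Y₀))
  omega

end FlatBilinear

theorem inner_eq_of_flat_of_surjective {V W : Type*} [AddCommGroup V] [Module ℝ V]
    [NormedAddCommGroup W] [InnerProductSpace ℝ W] (α : V →ₗ[ℝ] V →ₗ[ℝ] W) (Γ : Set V)
    (hflat : ∀ X ∈ Γ, ∀ Y Z T, ⟪α X T, α Y Z⟫ = ⟪α X Z, α Y T⟫) (Y₀ : V)
    (hsurj : ∀ w, ∃ S ∈ Γ, α S Y₀ = w) (X Y Z T : V) :
    ⟪α X T, α Y Z⟫ = ⟪α X Z, α Y T⟫ := by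
  obtain ⟨S, hSΓ, hS⟩ := hsurj (α Y Z)
  obtain ⟨S', hS'Γ, hS'⟩ := hsurj (α Y T)
  have key : α S T = α S' Z := ext_inner_right ℝ fun w => by
    obtain ⟨Q, hQΓ, rfl⟩ := hsurj w
    rw [← hflat S hSΓ, hS, real_inner_comm, hflat Q hQΓ, real_inner_comm, ← hS', hflat S' hS'Γ]
  rw [← hS, ← hS', real_inner_comm, hflat S hSΓ, key, ← hflat S' hS'Γ, real_inner_comm]

theorem chern_kuiper_equality_flat_general
    {V W : Type*} [AddCommGroup V] [Module ℝ V] [FiniteDimensional ℝ V]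
    [NormedAddCommGroup W] [InnerProductSpace ℝ W] [FiniteDimensional ℝ W]
    (α : V →ₗ[ℝ] V →ₗ[ℝ] W)
    (Γ : Submodule ℝ V)
    (hΓ : ∀ X : V, X ∈ Γ ↔
      ∀ Y Z T : V, ⟪α X T, α Y Z⟫ - ⟪α X Z, α Y T⟫ = 0)
    (heq : finrank ℝ Γ = finrank ℝ (ker α) + finrank ℝ W) :
    ∀ X Y Z T : V, ⟪α X T, α Y Z⟫ = ⟪α X Z, α Y T⟫ := by
  have hflat : ∀ X ∈ Γ, ∀ Y Z T, ⟪α X T, α Y Z⟫ = ⟪α X Z, α Y T⟫ :=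
    fun X hX Y Z T => sub_eq_zero.1 ((hΓ X).1 hX Y Z T)
  obtain ⟨Y₀, hY₀⟩ := exists_surjective_flip_of_finrank_ker_add_le (α.domRestrict Γ)
    (fun X S => hflat X X.2 S) (by have := α.finrank_ker_domRestrict_le Γ; omega)
  refine inner_eq_of_flat_of_surjective α Γ hflat Y₀ fun w => ?_
  obtain ⟨S, hS⟩ := hY₀ w
  exact ⟨S, S.2, hS⟩

/-- If equality `μ = ν + p` holds in the Chern–Kuiper inequalities, the curvature tensor
vanishes identically. -/
theorem chern_kuiper_equality_flat
    {V W : Type*} [AddCommGroup V] [Module ℝ V] [FiniteDimensional ℝ V]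
    [NormedAddCommGroup W] [InnerProductSpace ℝ W] [FiniteDimensional ℝ W]
    (α : V →ₗ[ℝ] V →ₗ[ℝ] W)
    (hsymm : ∀ X Y : V, α X Y = α Y X)
    (Γ : Submodule ℝ V)
    (hΓ : ∀ X : V, X ∈ Γ ↔
      ∀ Y Z T : V, ⟪α X T, α Y Z⟫ - ⟪α X Z, α Y T⟫ = 0)
    (heq : finrank ℝ Γ = finrank ℝ (ker α) + finrank ℝ W) :
    ∀ X Y Z T : V, ⟪α X T, α Y Z⟫ = ⟪α X Z, α Y T⟫ :=
  chern_kuiper_equality_flat_general α Γ hΓ heq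
end

section
/- Let α : V × V → W be a symmetric bilinear map with curvature R(X,Y,Z,T) = ⟨α(X,T),α(Y,Z)⟩ − ⟨α(X,Z),α(Y,T)⟩, nullity Γ of R, relative nullity Δ_α, and β := α|_{V × Γ}. If dim Δ_α ≤ dim V − dim W − 1, then dim S(β) ≤ dim W − 1, where S(β) = span{α(X,Z) : X ∈ V, Z ∈ Γ}. In other words, S(β) is a proper subspace of W. -/
/-!
Suppose `S(β) = W` and pick `Z₀ ∈ Γ` at which `α(·, Z₀)` has maximal rank. Membership of `Z` in
the nullity gives the exchange `⟪α(X,Y), α(T,Z)⟫ = ⟪α(X,Z), α(T,Y)⟫`. For `X` in the kernel of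
`α(·, Z₀)` and `Z ∈ Γ` it makes `α(X,Z)` orthogonal to the range of `α(·, Z₀)`; were it nonzero,
`α(·, Z₀ + tZ)` would have larger rank for a generic `t`. So `α(X, Γ) = 0`, and the exchange then
makes every `α(X,Y)` orthogonal to `S(β) = W`, i.e. `X ∈ Δ_α`. Hence `n ≤ p + ν`.
-/

open Module LinearMap RealInnerProductSpace

theorem Module.End.exists_ne_zero_injective_one_add_smul {K V : Type*} [Field K] [Infinite K]
    [AddCommGroup V] [Module K V] [FiniteDimensional K V] (f : End K V) :
    ∃ t : K, t ≠ 0 ∧ Function.Injective ⇑(1 + t • f) := by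
  obtain ⟨μ, hμ⟩ := (f.finite_hasEigenvalue.union (Set.finite_singleton 0)).infinite_compl.nonempty
  simp only [Set.mem_compl_iff, Set.mem_union, Set.mem_ofPred_eq, Set.mem_singleton_iff,
    not_or] at hμ
  obtain ⟨hμ_eig, hμ0⟩ := hμ
  refine ⟨-μ⁻¹, by simpa using hμ0, (injective_iff_map_eq_zero _).mpr fun x hx => ?_⟩
  have hx_eig : x ∈ f.eigenspace μ := by
    rw [End.mem_eigenspace_iff]
    have : μ • x - f x = 0 := by
      simpa [smul_sub, smul_smul, hμ0, sub_eq_add_neg] using congrArg (μ • ·) hx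
    exact (sub_eq_zero.mp this).symm
  rw [End.hasEigenvalue_iff, not_not, Submodule.eq_bot_iff] at hμ_eig
  exact hμ_eig x hx_eig

theorem LinearMap.exists_finrank_range_lt_range_add_smul {𝕜 V W : Type*} [RCLike 𝕜]
    [AddCommGroup V] [Module 𝕜 V] [NormedAddCommGroup W] [InnerProductSpace 𝕜 W]
    [FiniteDimensional 𝕜 W] (A B : V →ₗ[𝕜] W) {X : V} (hAX : A X = 0)
    (hBX : B X ∈ (range A)ᗮ) (hBX0 : B X ≠ 0) :
    ∃ t : 𝕜, finrank 𝕜 (range A) < finrank 𝕜 (range (A + t • B)) := by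
  set U := range A
  obtain ⟨J, hJ⟩ := A.rangeRestrict.exists_rightInverse_of_surjective A.range_rangeRestrict
  have hAJ : ∀ u : U, A (J u) = u := fun u => congrArg Subtype.val (LinearMap.congr_fun hJ u)
  set P := U.orthogonalProjectionOnto
  have hPBX : P (B X) = 0 := Submodule.orthogonalProjectionOnto_apply_of_mem_orthogonal hBX
  obtain ⟨t, ht0, hinj⟩ :=
    End.exists_ne_zero_injective_one_add_smul (P.toLinearMap ∘ₗ B ∘ₗ J)
  -- `(u, c) ↦ (A + t B) (J u + c X)` is injective: project onto `U` to recover `u`, then `c`.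
  set Ψ := (A + t • B) ∘ₗ J.coprod (toSpanSingleton 𝕜 V X)
  have hΨ : Function.Injective Ψ := by
    refine (injective_iff_map_eq_zero _).mpr fun ⟨u, c⟩ h => ?_
    have h' : (u : W) + t • B (J u) + (t * c) • B X = 0 := by
      simpa [Ψ, hAX, hAJ, smul_smul, add_assoc] using h
    have hu : u = 0 := hinj <| by
      simpa [P, hPBX, Submodule.orthogonalProjectionOnto_mem_subspace_eq_self]
        using congrArg P h'
    have hc : c = 0 := by
      simpa [hu, ht0, hBX0] using h'
    simp [hu, hc]
  refine ⟨t, ?_⟩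
  calc finrank 𝕜 U < finrank 𝕜 (U × 𝕜) := by simp
    _ = finrank 𝕜 (range Ψ) := (finrank_range_of_inj hΨ).symm
    _ ≤ finrank 𝕜 (range (A + t • B)) := Submodule.finrank_mono (range_comp_le_range _ _)

section CurvatureNullity

variable {V W : Type*} [AddCommGroup V] [Module ℝ V] [NormedAddCommGroup W]
  [InnerProductSpace ℝ W] (α : V →ₗ[ℝ] V →ₗ[ℝ] W)

theorem inner_apply_comm_of_curvature_null (hsymm : ∀ X Y : V, α X Y = α Y X) {Z : V}
    (hZ : ∀ Y Z' T : V, ⟪α Z T, α Y Z'⟫ - ⟪α Z Z', α Y T⟫ = 0) (X Y T : V) :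
    ⟪α X Y, α T Z⟫ = ⟪α X Z, α T Y⟫ := by
  have hZ' (Y Z' T : V) : ⟪α Z T, α Y Z'⟫ = ⟪α Z Z', α Y T⟫ := sub_eq_zero.mp (hZ Y Z' T)
  calc ⟪α X Y, α T Z⟫ = ⟪α Z T, α X Y⟫ := by rw [real_inner_comm, hsymm T Z]
    _ = ⟪α Z Y, α T X⟫ := by rw [hZ' X Y T, hsymm X T]
    _ = ⟪α X Z, α T Y⟫ := by rw [← hZ' T Y X, hsymm Z X]

variable (Γ : Submodule ℝ V)

theorem exists_mem_forall_finrank_range_flip_le [FiniteDimensional ℝ W] :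
    ∃ Z₀ ∈ Γ, ∀ Z ∈ Γ, finrank ℝ (range (α.flip Z)) ≤ finrank ℝ (range (α.flip Z₀)) := by
  have hbdd : BddAbove ((fun Z => finrank ℝ (range (α.flip Z))) '' Γ) :=
    ⟨finrank ℝ W, by rintro _ ⟨Z, -, rfl⟩; exact Submodule.finrank_le _⟩
  obtain ⟨_, ⟨Z₀, hZ₀, rfl⟩, hmax⟩ := hbdd.exists_isGreatest_of_nonempty ⟨_, 0, Γ.zero_mem, rfl⟩
  exact ⟨Z₀, hZ₀, fun Z hZ => hmax ⟨Z, hZ, rfl⟩⟩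

variable {α Γ}
variable (hexch : ∀ X Y T : V, ∀ Z ∈ Γ, ⟪α X Y, α T Z⟫ = ⟪α X Z, α T Y⟫)
include hexch

theorem apply_eq_zero_of_apply_eq_zero_of_finrank_max [FiniteDimensional ℝ W] {Z₀ : V}
    (hZ₀ : Z₀ ∈ Γ)
    (hmax : ∀ Z ∈ Γ, finrank ℝ (range (α.flip Z)) ≤ finrank ℝ (range (α.flip Z₀)))
    {X : V} (hX : α X Z₀ = 0) {Z : V} (hZ : Z ∈ Γ) : α X Z = 0 := by
  by_contra hXZ
  have horth : α.flip Z X ∈ (range (α.flip Z₀))ᗮ := by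
    rintro _ ⟨Y, rfl⟩
    change ⟪α Y Z₀, α X Z⟫ = 0
    rw [real_inner_comm, hexch X Z Y Z₀ hZ₀, hX, inner_zero_left]
  obtain ⟨t, ht⟩ := (α.flip Z₀).exists_finrank_range_lt_range_add_smul (α.flip Z) hX horth hXZ
  have hflip : α.flip Z₀ + t • α.flip Z = α.flip (Z₀ + t • Z) := by
    rw [map_add, map_smul]
  rw [hflip] at ht
  exact (hmax _ (Γ.add_mem hZ₀ (Γ.smul_mem t hZ))).not_gt ht

theorem ker_flip_le_ker
    (hS : Submodule.span ℝ {w : W | ∃ X : V, ∃ Z ∈ Γ, w = α X Z} = ⊤) {Z₀ : V}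
    (hZ₀ : ∀ X, α X Z₀ = 0 → ∀ Z ∈ Γ, α X Z = 0) :
    ker (α.flip Z₀) ≤ ker α := by
  intro X hX
  ext Y
  have hspan : Submodule.span ℝ {w : W | ∃ X : V, ∃ Z ∈ Γ, w = α X Z} ≤ (ℝ ∙ α X Y)ᗮ := by
    rw [Submodule.span_le]
    rintro _ ⟨T, Z, hZ, rfl⟩
    rw [SetLike.mem_coe, Submodule.mem_orthogonal_singleton_iff_inner_right,
      hexch X Y T Z hZ, hZ₀ X hX Z hZ, inner_zero_left]
  have hXY : α X Y ∈ (ℝ ∙ α X Y)ᗮ := hspan (hS ▸ Submodule.mem_top)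
  simpa using (Submodule.mem_orthogonal_singleton_iff_inner_right.mp hXY)

end CurvatureNullity

/-- If `ν ≤ n - p - 1`, then `S(β)` is a proper subspace of `W`: `dim S(β) ≤ p - 1`. -/
theorem span_beta_proper
    {V W : Type*} [AddCommGroup V] [Module ℝ V] [FiniteDimensional ℝ V]
    [NormedAddCommGroup W] [InnerProductSpace ℝ W] [FiniteDimensional ℝ W]
    (α : V →ₗ[ℝ] V →ₗ[ℝ] W)
    (hsymm : ∀ X Y : V, α X Y = α Y X)
    (Γ : Submodule ℝ V)
    (hΓ : ∀ X : V, X ∈ Γ ↔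
      ∀ Y Z T : V, ⟪α X T, α Y Z⟫ - ⟪α X Z, α Y T⟫ = 0)
    (hν : finrank ℝ (ker α) + finrank ℝ W + 1 ≤ finrank ℝ V) :
    finrank ℝ (Submodule.span ℝ {w : W | ∃ X : V, ∃ Z ∈ Γ, w = α X Z}) < finrank ℝ W := by
  by_contra! hS
  replace hS := Submodule.eq_top_of_finrank_eq (le_antisymm (Submodule.finrank_le _) hS)
  have hexch : ∀ X Y T : V, ∀ Z ∈ Γ, ⟪α X Y, α T Z⟫ = ⟪α X Z, α T Y⟫ :=
    fun X Y T Z hZ => inner_apply_comm_of_curvature_null α hsymm ((hΓ Z).mp hZ) X Y T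
  obtain ⟨Z₀, hZ₀, hmax⟩ := exists_mem_forall_finrank_range_flip_le α Γ
  have hker : ker (α.flip Z₀) ≤ ker α := ker_flip_le_ker hexch hS
    fun _ hX _ hZ => apply_eq_zero_of_apply_eq_zero_of_finrank_max hexch hZ₀ hmax hX hZ
  have hrank_nullity := (α.flip Z₀).finrank_range_add_finrank_ker
  have hker_le := Submodule.finrank_mono hker
  have hrange_le := Submodule.finrank_le (range (α.flip Z₀))
  omega
end

section
/- Let α : V × V → W be a symmetric bilinear map with nullity Γ of its curvature tensor R and relative nullity Δ_α, and β := α|_{V × Γ}. Then dim Δ_α + dim(Δ_β + Γ) = dim Δ_β + dim Γ, where Δ_β is the left nullity of β. -/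
open Module LinearMap RealInnerProductSpace

/-- Dimension relation `ν + dim(Δ_β + Γ) = dim Δ_β + μ`. -/
theorem dim_relation_nullities
    {V W : Type*} [AddCommGroup V] [Module ℝ V] [FiniteDimensional ℝ V]
    [NormedAddCommGroup W] [InnerProductSpace ℝ W] [FiniteDimensional ℝ W]
    (α : V →ₗ[ℝ] V →ₗ[ℝ] W)
    (hsymm : ∀ X Y : V, α X Y = α Y X)
    (Γ : Submodule ℝ V)
    (hΓ : ∀ X : V, X ∈ Γ ↔
      ∀ Y Z T : V, ⟪α X T, α Y Z⟫ - ⟪α X Z, α Y T⟫ = 0)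
    (Δβ : Submodule ℝ V)
    (hΔβ : ∀ X : V, X ∈ Δβ ↔ ∀ Z ∈ Γ, α X Z = 0) :
    finrank ℝ (ker α) + finrank ℝ (Δβ ⊔ Γ : Submodule ℝ V) =
      finrank ℝ Δβ + finrank ℝ Γ := by
  have hker : LinearMap.ker α = Δβ ⊓ Γ := by
    ext X
    simp only [LinearMap.mem_ker, Submodule.mem_inf]
    constructor
    · intro h
      have h0 : ∀ Y, α X Y = 0 := fun Y => by rw [h]; rfl
      exact ⟨(hΔβ X).2 (fun Z _ => h0 Z), (hΓ X).2 (fun Y Z T => by simp [h0])⟩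
    · rintro ⟨hb, hg⟩
      ext Y
      have hXX : α X X = 0 := (hΔβ X).1 hb X hg
      have h1 := (hΓ X).1 hg Y X Y
      rw [hXX] at h1
      simp only [inner_zero_left, sub_zero] at h1
      rw [hsymm Y X] at h1
      simpa using inner_self_eq_zero.mp h1
  rw [hker]
  have := Submodule.finrank_sup_add_finrank_inf_eq Δβ Γ
  omega
end

section
/- (Moore's diagonalization, special case used in the paper) Let γ : Γ × Γ → W₀ be a symmetric flat bilinear form on a finite-dimensional real vector space Γ with values in an inner product space W₀, with trivial nullity and with S(γ) = W₀ and dim Γ − dim(nullity γ) = dim W₀ =: m. Then there exist vectors Z₁, …, Z_m ∈ Γ such that γ(Z_i, Z_j) = 0 for i ≠ j and {γ(Z_i, Z_i)} is an orthonormal basis of W₀. -/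
open Module LinearMap RealInnerProductSpace

/-!
Choose `X` maximising the rank of `γ X = γ(X, ·)`. If `γ X z = 0`, then for `t ≠ 0` the map
`γ (X + t • Y)` sends `t⁻¹ • z` to `γ Y z` while its rank is still at most that of `γ X`;
as linear independence is an open condition, letting `t → 0` gives `γ Y z ∈ range (γ X)`.
Flatness makes `γ Y z` orthogonal to that range, hence `γ Y z = 0` for all `Y` and `z = 0`.
So `γ X : Γ ≃ W₀`, and flatness makes the operators `γ Y ∘ (γ X)⁻¹` symmetric and pairwise
commuting. Their joint eigenbasis `w` pulls back to vectors `Z_i` with `γ (Z_i) (Z_j)` a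
multiple of both `w_i` and `w_j`, hence zero for `i ≠ j`. Flatness once more makes the
`γ (Z_i) (Z_i)` pairwise orthogonal and, by trivial nullity, nonzero; rescaling the `Z_i`
normalises them.
-/

open scoped Function

section Pencil

variable {𝕜 V W : Type*} [NontriviallyNormedField 𝕜] [CompleteSpace 𝕜]
  [AddCommGroup V] [Module 𝕜 V] [NormedAddCommGroup W] [NormedSpace 𝕜 W] [FiniteDimensional 𝕜 W]

theorem LinearMap.apply_mem_range_of_finrank_range_add_smul_le (A B : V →ₗ[𝕜] W)
    (hA : ∀ t : 𝕜, finrank 𝕜 (range (A + t • B)) ≤ finrank 𝕜 (range A)) {z : V}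
    (hz : A z = 0) : B z ∈ range A := by
  by_contra hBz
  set r := finrank 𝕜 (range A)
  let b := finBasis 𝕜 (range A)
  choose v hv using fun i => mem_range.mp (b i).2
  let F : 𝕜 → Fin (r + 1) → W := fun t =>
    (Fin.snoc (fun i => A (v i)) (B z) : Fin (r + 1) → W) +
      t • (Fin.snoc (fun i => B (v i)) 0 : Fin (r + 1) → W)
  have hAv : (fun i => A (v i)) = (range A).subtype ∘ b := funext hv
  have hF0 : LinearIndependent 𝕜 (F 0) := by
    simp only [F, zero_smul, add_zero, linearIndependent_finSnoc]
    rw [hAv]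
    refine ⟨b.linearIndependent.map' _ (Submodule.ker_subtype _), ?_⟩
    rwa [Set.range_comp, ← Submodule.map_span, b.span_eq, Submodule.map_top,
      Submodule.range_subtype]
  have hF : Continuous F := continuous_const.add (continuous_id.smul continuous_const)
  obtain ⟨t, hLI, ht⟩ : ∃ t, LinearIndependent 𝕜 (F t) ∧ t ≠ 0 :=
    (((hF.tendsto 0).eventually hF0.eventually).filter_mono (nhdsWithin_le_nhds (s := {0}ᶜ))
      |>.and self_mem_nhdsWithin).exists
  have hmem : ∀ i, F t i ∈ range (A + t • B) := by
    refine Fin.lastCases ?_ fun i => ⟨v i, by simp [F]⟩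
    exact ⟨t⁻¹ • z, by simp [F, hz, smul_smul, ht]⟩
  have hle := Submodule.finrank_mono (Submodule.span_le.mpr (Set.range_subset_iff.mpr hmem))
  rw [finrank_span_eq_card hLI, Fintype.card_fin] at hle
  exact (hle.trans (hA t)).not_gt (Nat.lt_succ_self r)

end Pencil

theorem LinearMap.exists_forall_finrank_range_le {K ι V W : Type*} [DivisionRing K]
    [AddCommGroup V] [Module K V] [AddCommGroup W] [Module K W] [FiniteDimensional K W]
    [Nonempty ι] (f : ι → V →ₗ[K] W) :
    ∃ i, ∀ j, finrank K (range (f j)) ≤ finrank K (range (f i)) := by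
  have hbdd : BddAbove (Set.range fun j => finrank K (range (f j))) :=
    ⟨finrank K W, Set.forall_mem_range.mpr fun j => Submodule.finrank_le _⟩
  obtain ⟨i, hi⟩ := Nat.sSup_mem (Set.range_nonempty _) hbdd
  exact ⟨i, fun j => (le_csSup hbdd ⟨j, rfl⟩).trans_eq hi.symm⟩

theorem LinearMap.IsSymmetric.exists_basis_apply_eq_smul_of_commute {𝕜 E ι : Type*}
    [RCLike 𝕜] [NormedAddCommGroup E] [InnerProductSpace 𝕜 E] [FiniteDimensional 𝕜 E]
    {T : ι → E →ₗ[𝕜] E} (hT : ∀ i, (T i).IsSymmetric) (hC : Pairwise (Commute on T)) :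
    ∃ (b : Basis (Fin (finrank 𝕜 E)) 𝕜 E) (χ : Fin (finrank 𝕜 E) → ι → 𝕜),
      ∀ k i, T i (b k) = χ k i • b k := by
  set S := ⋃ χ : ι → 𝕜, ((⨅ i, End.eigenspace (T i) (χ i) : Submodule 𝕜 E) : Set E)
  have hS : Submodule.span 𝕜 S = ⊤ := by
    rw [Submodule.span_iUnion]
    simpa only [Submodule.span_eq] using iSup_iInf_eq_top_of_commute hT hC
  obtain ⟨s, hsS, hspan, hli⟩ := exists_linearIndependent 𝕜 S
  let b₀ : Basis s 𝕜 E := Basis.mk hli (by rw [Subtype.range_coe, hspan, hS])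
  let b := b₀.reindex (b₀.indexEquiv (finBasis 𝕜 E))
  have hbS : ∀ k, ∃ χ : ι → 𝕜, ∀ i, T i (b k) = χ i • b k := fun k => by
    obtain ⟨χ, hχ⟩ := Set.mem_iUnion.mp (hsS ((b₀.indexEquiv (finBasis 𝕜 E)).symm k).2)
    refine ⟨χ, fun i => End.mem_eigenspace_iff.mp ?_⟩
    simpa [b, b₀] using (Submodule.mem_iInf _).mp hχ i
  choose χ hχ using hbS
  exact ⟨b, χ, hχ⟩

section Flat

variable {Γ W : Type*} [AddCommGroup Γ] [Module ℝ Γ] [NormedAddCommGroup W]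
  [InnerProductSpace ℝ W]

theorem eq_zero_of_flat_of_apply_self_eq_zero (γ : Γ →ₗ[ℝ] Γ →ₗ[ℝ] W)
    (hsymm : ∀ X Y : Γ, γ X Y = γ Y X)
    (hflat : ∀ X Y Z T : Γ, ⟪γ X Y, γ Z T⟫ = ⟪γ X T, γ Z Y⟫)
    (hnull : ker γ = ⊥) {Z : Γ} (hZ : γ Z Z = 0) : Z = 0 := by
  have hγZ : γ Z = 0 := LinearMap.ext fun A => inner_self_eq_zero.mp <| by
    have h := hflat Z A A Z
    rwa [hsymm A Z, hZ, inner_zero_left] at h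
  rwa [← mem_ker, hnull, Submodule.mem_bot] at hγZ

theorem injective_apply_of_flat_of_forall_finrank_range_le [FiniteDimensional ℝ W]
    (γ : Γ →ₗ[ℝ] Γ →ₗ[ℝ] W)
    (hsymm : ∀ X Y : Γ, γ X Y = γ Y X)
    (hflat : ∀ X Y Z T : Γ, ⟪γ X Y, γ Z T⟫ = ⟪γ X T, γ Z Y⟫)
    (hnull : ker γ = ⊥) {X : Γ} (hX : ∀ Y, finrank ℝ (range (γ Y)) ≤ finrank ℝ (range (γ X))) :
    Function.Injective (γ X) := by
  rw [← ker_eq_bot, eq_bot_iff, ← hnull]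
  intro z hz
  rw [mem_ker] at hz ⊢
  refine LinearMap.ext fun Y => ?_
  have hmem : γ Y z ∈ range (γ X) := by
    refine apply_mem_range_of_finrank_range_add_smul_le _ _ (fun t => ?_) hz
    rw [← map_smul, ← map_add]
    exact hX _
  have horth : γ Y z ∈ (range (γ X))ᗮ := by
    rintro _ ⟨T, rfl⟩
    rw [hflat, hz, inner_zero_left]
  rw [LinearMap.zero_apply, hsymm]
  exact Submodule.disjoint_def.mp (Submodule.orthogonal_disjoint _) _ hmem horth

theorem exists_bijective_apply_of_flat [FiniteDimensional ℝ Γ] [FiniteDimensional ℝ W]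
    (γ : Γ →ₗ[ℝ] Γ →ₗ[ℝ] W)
    (hsymm : ∀ X Y : Γ, γ X Y = γ Y X)
    (hflat : ∀ X Y Z T : Γ, ⟪γ X Y, γ Z T⟫ = ⟪γ X T, γ Z Y⟫)
    (hnull : ker γ = ⊥) (hdim : finrank ℝ Γ = finrank ℝ W) :
    ∃ X : Γ, Function.Bijective (γ X) := by
  obtain ⟨X, hX⟩ := exists_forall_finrank_range_le γ
  have hinj := injective_apply_of_flat_of_forall_finrank_range_le γ hsymm hflat hnull hX
  exact ⟨X, hinj, (injective_iff_surjective_of_finrank_eq_finrank hdim).mp hinj⟩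

theorem exists_linearIndependent_apply_eq_zero_of_ne_of_bijective [FiniteDimensional ℝ W]
    (γ : Γ →ₗ[ℝ] Γ →ₗ[ℝ] W)
    (hsymm : ∀ X Y : Γ, γ X Y = γ Y X)
    (hflat : ∀ X Y Z T : Γ, ⟪γ X Y, γ Z T⟫ = ⟪γ X T, γ Z Y⟫)
    {X : Γ} (hX : Function.Bijective (γ X)) :
    ∃ Z : Fin (finrank ℝ W) → Γ, LinearIndependent ℝ Z ∧ ∀ i j, i ≠ j → γ (Z i) (Z j) = 0 := by
  let e := LinearEquiv.ofBijective (γ X) hX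
  let T : Γ → W →ₗ[ℝ] W := fun Y => γ Y ∘ₗ e.symm.toLinearMap
  have hTflat : ∀ Y Y' u v, ⟪T Y u, T Y' v⟫ = ⟪T Y v, T Y' u⟫ := fun Y Y' u v => hflat ..
  have hTX : ∀ u, T X u = u := e.apply_symm_apply
  have hT : ∀ Y, (T Y).IsSymmetric := fun Y u v => by
    have h := hTflat Y X u v
    rwa [hTX, hTX, real_inner_comm u] at h
  have hC : Pairwise (Commute on T) := fun Y Y' _ =>
    LinearMap.ext fun u => ext_inner_right ℝ fun v => by
      calc ⟪T Y (T Y' u), v⟫ = ⟪T Y' u, T Y v⟫ := hT Y _ v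
        _ = ⟪T Y u, T Y' v⟫ := by rw [hTflat, real_inner_comm]
        _ = ⟪T Y' (T Y u), v⟫ := (hT Y' _ v).symm
  obtain ⟨b, χ, hχ⟩ := IsSymmetric.exists_basis_apply_eq_smul_of_commute hT hC
  let Z := fun k => e.symm (b k)
  have hγZ : ∀ i j, γ (Z i) (Z j) = χ j (Z i) • b j := fun i j => hχ j (Z i)
  refine ⟨Z, b.linearIndependent.map' _ e.symm.ker, fun i j hij => ?_⟩
  have hswap : χ j (Z i) • b j = χ i (Z j) • b i := by rw [← hγZ, hsymm, hγZ]
  have hχ0 : χ j (Z i) = 0 := by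
    simpa [Finsupp.single_apply, hij] using congrArg (fun w => b.repr w j) hswap
  rw [hγZ, hχ0, zero_smul]

theorem exists_orthonormal_apply_self_of_apply_eq_zero_of_ne {ι : Type*}
    (γ : Γ →ₗ[ℝ] Γ →ₗ[ℝ] W)
    (hflat : ∀ X Y Z T : Γ, ⟪γ X Y, γ Z T⟫ = ⟪γ X T, γ Z Y⟫)
    (Z : ι → Γ) (hoff : ∀ i j, i ≠ j → γ (Z i) (Z j) = 0) (hdiag : ∀ i, γ (Z i) (Z i) ≠ 0) :
    ∃ Z' : ι → Γ, (∀ i j, i ≠ j → γ (Z' i) (Z' j) = 0) ∧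
      Orthonormal ℝ fun i => γ (Z' i) (Z' i) := by
  let c i := (√‖γ (Z i) (Z i)‖)⁻¹
  have hZ' : ∀ i j, γ (c i • Z i) (c j • Z j) = (c i * c j) • γ (Z i) (Z j) := fun i j => by
    rw [map_smul, map_smul, LinearMap.smul_apply, smul_smul, mul_comm]
  have hoff' : ∀ i j, i ≠ j → γ (c i • Z i) (c j • Z j) = 0 := fun i j hij => by
    rw [hZ', hoff i j hij, smul_zero]
  refine ⟨fun i => c i • Z i, hoff', fun i => ?_, fun i j hij => ?_⟩
  · have hpos : 0 < ‖γ (Z i) (Z i)‖ := norm_pos_iff.mpr (hdiag i)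
    change ‖γ (c i • Z i) (c i • Z i)‖ = 1
    rw [hZ', norm_smul, Real.norm_eq_abs, ← mul_inv, Real.mul_self_sqrt hpos.le,
      abs_inv, abs_norm, inv_mul_cancel₀ hpos.ne']
  · change ⟪γ (c i • Z i) (c i • Z i), γ (c j • Z j) (c j • Z j)⟫ = 0
    rw [hflat, hoff' i j hij, inner_zero_left]

end Flat

theorem moore_diagonalization_general
    {Γ W₀ : Type*} [AddCommGroup Γ] [Module ℝ Γ] [FiniteDimensional ℝ Γ]
    [NormedAddCommGroup W₀] [InnerProductSpace ℝ W₀] [FiniteDimensional ℝ W₀]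
    (γ : Γ →ₗ[ℝ] Γ →ₗ[ℝ] W₀)
    (hsymm : ∀ X Y : Γ, γ X Y = γ Y X)
    (hflat : ∀ X Y Z T : Γ, ⟪γ X Y, γ Z T⟫ = ⟪γ X T, γ Z Y⟫)
    (hnull : ker γ = ⊥)
    (hdim : finrank ℝ Γ = finrank ℝ W₀) :
    ∃ Z : Fin (finrank ℝ W₀) → Γ,
      (∀ i j, i ≠ j → γ (Z i) (Z j) = 0) ∧
      ∃ b : OrthonormalBasis (Fin (finrank ℝ W₀)) ℝ W₀,
        ∀ i, b i = γ (Z i) (Z i) := by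
  obtain ⟨X, hX⟩ := exists_bijective_apply_of_flat γ hsymm hflat hnull hdim
  obtain ⟨Z, hZ, hoff⟩ :=
    exists_linearIndependent_apply_eq_zero_of_ne_of_bijective γ hsymm hflat hX
  have hdiag : ∀ i, γ (Z i) (Z i) ≠ 0 := fun i hi =>
    hZ.ne_zero i (eq_zero_of_flat_of_apply_self_eq_zero γ hsymm hflat hnull hi)
  obtain ⟨Z', hoff', hon⟩ :=
    exists_orthonormal_apply_self_of_apply_eq_zero_of_ne γ hflat Z hoff hdiag
  have hspan := hon.linearIndependent.span_eq_top_of_card_eq_finrank' (Fintype.card_fin _)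
  exact ⟨Z', hoff', OrthonormalBasis.mk hon hspan.ge, fun i => by simp⟩

/-- Moore's diagonalization: a symmetric flat bilinear form with trivial nullity,
full span, and `dim Γ = dim W₀ = m` can be diagonalized by vectors `Z₁, …, Z_m` with
`γ(Z_i, Z_j) = 0` for `i ≠ j` and `{γ(Z_i, Z_i)}` an orthonormal basis of `W₀`. -/
theorem moore_diagonalization
    {Γ W₀ : Type*} [AddCommGroup Γ] [Module ℝ Γ] [FiniteDimensional ℝ Γ]
    [NormedAddCommGroup W₀] [InnerProductSpace ℝ W₀] [FiniteDimensional ℝ W₀]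
    (γ : Γ →ₗ[ℝ] Γ →ₗ[ℝ] W₀)
    (hsymm : ∀ X Y : Γ, γ X Y = γ Y X)
    (hflat : ∀ X Y Z T : Γ, ⟪γ X Y, γ Z T⟫ = ⟪γ X T, γ Z Y⟫)
    (hnull : ker γ = ⊥)
    (hspan : Submodule.span ℝ {w : W₀ | ∃ X Y : Γ, w = γ X Y} = ⊤)
    (hdim : finrank ℝ Γ = finrank ℝ W₀) :
    ∃ Z : Fin (finrank ℝ W₀) → Γ,
      (∀ i j, i ≠ j → γ (Z i) (Z j) = 0) ∧
      ∃ b : OrthonormalBasis (Fin (finrank ℝ W₀)) ℝ W₀,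
        ∀ i, b i = γ (Z i) (Z i) :=
  moore_diagonalization_general γ hsymm hflat hnull hdim
end

section
/- With φ and R_φ as above (φ : V × (V ⊕ L) → E bilinear, symmetric on V × V), the left curvature nullity Γ_φ^l = {X ∈ V : R_φ(X,Y,v,w) = 0 ∀ Y ∈ V, v,w ∈ V ⊕ L} is contained in Γ_φ^r ∩ V, where Γ_φ^r = {v ∈ V ⊕ L : R_φ(X,Y,u,v) = 0 ∀ X,Y ∈ V, u ∈ V ⊕ L} is the right curvature nullity. -/
open Module LinearMap RealInnerProductSpace

/-- The left curvature nullity `Γ_φ^l` is contained in `Γ_φ^r ∩ V` (identifying `V` with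
`V ⊕ 0 ⊆ V ⊕ L`). -/
theorem left_curvature_nullity_subset_right
    {V L E : Type*} [AddCommGroup V] [Module ℝ V] [FiniteDimensional ℝ V]
    [AddCommGroup L] [Module ℝ L] [FiniteDimensional ℝ L]
    [NormedAddCommGroup E] [InnerProductSpace ℝ E] [FiniteDimensional ℝ E]
    (φ : V →ₗ[ℝ] (V × L) →ₗ[ℝ] E)
    (hsymm : ∀ X Y : V, φ X (Y, (0 : L)) = φ Y (X, (0 : L))) :
    ∀ X : V,
      (∀ (Y : V) (v w : V × L), ⟪φ X w, φ Y v⟫ - ⟪φ X v, φ Y w⟫ = 0) →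
      (∀ (X' Y : V) (u : V × L),
        ⟪φ X' (X, (0 : L)), φ Y u⟫ - ⟪φ X' u, φ Y (X, (0 : L))⟫ = 0) := by
  intro X h X' Y u
  have h1 : ⟪φ X (X', (0:L)), φ Y u⟫ = ⟪φ X u, φ Y (X', (0:L))⟫ := by
    have := h Y u (X', (0:L)); linarith
  have h2 : ⟪φ X (Y, (0:L)), φ X' u⟫ = ⟪φ X u, φ X' (Y, (0:L))⟫ := by
    have := h X' u (Y, (0:L)); linarith
  rw [hsymm X' X, hsymm Y X, h1, real_inner_comm (φ X (Y, (0:L))) (φ X' u), h2, hsymm Y X', sub_self]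
end
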